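/- arXiv:0910.5936 — 6 statements merged into one kernel-verified Lean document; each statement's English description precedes it below -/
import Mathlib

section
/- For a matrix A in K^{n×m} (K = ℝ or ℂ, n ≤ m), the Frobenius distance from A to the set N of rank-deficient matrices (matrices of rank < n) equals the smallest singular value σ_n(A); that is, inf_{S ∈ N} ‖A − S‖_F = σ_n(A). -/
open scoped BigOperators
open Matrix

/-- The Frobenius norm of a matrix. -/
noncomputable def frobNorm {𝕜 : Type*} [RCLike 𝕜] {n m : ℕ} (A : Matrix (Fin n) (Fin m) 𝕜) : ℝ :=
  Real.sqrt (∑ i, ∑ j, ‖A i j‖ ^ 2)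

/-- The smallest singular value `σ_n(A)` of an `n × m` matrix (`n ≤ m`),
characterized as the minimum of `‖Aᴴ u‖` over unit vectors `u ∈ 𝕜ⁿ`. -/
noncomputable def sigmaMin {𝕜 : Type*} [RCLike 𝕜] {n m : ℕ} (A : Matrix (Fin n) (Fin m) 𝕜) : ℝ :=
  ⨅ u : Metric.sphere (0 : EuclideanSpace 𝕜 (Fin n)) 1, ‖Matrix.toEuclideanLin Aᴴ (u : EuclideanSpace 𝕜 (Fin n))‖

/-! A matrix `S` has rank `< n` exactly when some unit vector `u` satisfies `Sᴴ u = 0`. For such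
`u`, `Aᴴ u = (A - S)ᴴ u`, and `‖Mᴴ u‖ ≤ ‖M‖_F` for unit `u`, so `σ_n(A) ≤ ‖A - S‖_F`.
Conversely, if `u` is a unit vector minimising `‖Aᴴ u‖`, the deflated matrix
`S = A - u (Aᴴ u)ᴴ` has `Sᴴ u = 0`, and `‖A - S‖_F ≤ ‖u‖ ‖Aᴴ u‖ = σ_n(A)`. -/

theorem Matrix.rank_lt_card_width_iff_exists_mulVec_eq_zero {K : Type*} [Field K]
    {m n : Type*} [Fintype n] {M : Matrix m n K} :
    M.rank < Fintype.card n ↔ ∃ v ≠ 0, M *ᵥ v = 0 := by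
  have hrank := LinearMap.finrank_range_add_finrank_ker M.mulVecLin
  rw [Module.finrank_fintype_fun_eq_card] at hrank
  have hker : (∃ v ≠ 0, M *ᵥ v = 0) ↔ M.mulVecLin.ker ≠ ⊥ := by
    simp [Submodule.ne_bot_iff, and_comm]
  rw [rank, hker, ← Submodule.one_le_finrank_iff]
  omega

section SingularValues

variable {𝕜 : Type*} [RCLike 𝕜] {n m : ℕ}

attribute [local instance] Matrix.frobeniusNormedAddCommGroup

-- `Matrix.rank_conjTranspose` needs the star-ordered ring structure on `𝕜`.
open scoped ComplexOrder

theorem sigmaMin_le (A : Matrix (Fin n) (Fin m) 𝕜) {u : EuclideanSpace 𝕜 (Fin n)} (hu : ‖u‖ = 1) :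
    sigmaMin A ≤ ‖toEuclideanLin Aᴴ u‖ := by
  have hbdd : BddBelow (Set.range fun v : Metric.sphere (0 : EuclideanSpace 𝕜 (Fin n)) 1 ↦
      ‖toEuclideanLin Aᴴ (v : EuclideanSpace 𝕜 (Fin n))‖) :=
    ⟨0, Set.forall_mem_range.mpr fun _ ↦ norm_nonneg _⟩
  exact ciInf_le hbdd ⟨u, mem_sphere_zero_iff_norm.mpr hu⟩

theorem exists_norm_eq_one_sigmaMin_eq (hn : 0 < n) (A : Matrix (Fin n) (Fin m) 𝕜) :
    ∃ u : EuclideanSpace 𝕜 (Fin n), ‖u‖ = 1 ∧ sigmaMin A = ‖toEuclideanLin Aᴴ u‖ := by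
  have : Nonempty (Fin n) := ⟨⟨0, hn⟩⟩
  obtain ⟨u, hu, hmin⟩ := (isCompact_sphere (0 : EuclideanSpace 𝕜 (Fin n)) 1).exists_isMinOn
    (NormedSpace.sphere_nonempty.mpr zero_le_one)
    (toEuclideanLin Aᴴ).continuous_of_finiteDimensional.norm.continuousOn
  exact ⟨u, mem_sphere_zero_iff_norm.mp hu, hmin.iInf_eq hu⟩

theorem frobNorm_eq_norm (A : Matrix (Fin n) (Fin m) 𝕜) : frobNorm A = ‖A‖ := by
  simp [frobNorm, frobenius_norm_def, Real.sqrt_eq_rpow]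

theorem Matrix.frobenius_norm_toLp_mulVec_le {ι κ : Type*} [Fintype ι] [Fintype κ]
    (M : Matrix ι κ 𝕜) (v : κ → 𝕜) :
    ‖WithLp.toLp 2 (M *ᵥ v)‖ ≤ ‖M‖ * ‖WithLp.toLp 2 v‖ := by
  rw [← frobenius_norm_replicateCol (ι := Unit), replicateCol_mulVec,
    ← frobenius_norm_replicateCol (ι := Unit) v]
  exact frobenius_norm_mul _ _

theorem Matrix.frobenius_norm_vecMulVec_star_le {ι κ : Type*} [Fintype ι] [Fintype κ]
    (u : ι → 𝕜) (w : κ → 𝕜) :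
    ‖vecMulVec u (star w)‖ ≤ ‖WithLp.toLp 2 u‖ * ‖WithLp.toLp 2 w‖ := by
  rw [vecMulVec_eq Unit, ← conjTranspose_replicateCol]
  simpa only [frobenius_norm_conjTranspose, frobenius_norm_replicateCol] using
    frobenius_norm_mul (replicateCol Unit u) (replicateCol Unit w)ᴴ

theorem sigmaMin_le_frobNorm_sub (A S : Matrix (Fin n) (Fin m) 𝕜) (hS : S.rank < n) :
    sigmaMin A ≤ frobNorm (A - S) := by
  obtain ⟨v, hv, hSv⟩ : ∃ v : Fin n → 𝕜, v ≠ 0 ∧ Sᴴ *ᵥ v = 0 := by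
    rwa [← rank_lt_card_width_iff_exists_mulVec_eq_zero, rank_conjTranspose, Fintype.card_fin]
  set x : EuclideanSpace 𝕜 (Fin n) := WithLp.toLp 2 v
  have hx : x ≠ 0 := by simpa [x] using hv
  set u := (‖x‖⁻¹ : 𝕜) • x
  have hu : ‖u‖ = 1 := norm_smul_inv_norm hx
  have hSu : Sᴴ *ᵥ WithLp.ofLp u = 0 := by
    simp only [u, x, WithLp.ofLp_smul, mulVec_smul, hSv, smul_zero]
  calc sigmaMin A ≤ ‖toEuclideanLin Aᴴ u‖ := sigmaMin_le A hu
    _ = ‖WithLp.toLp 2 ((A - S)ᴴ *ᵥ WithLp.ofLp u)‖ := by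
      rw [conjTranspose_sub, sub_mulVec, hSu, sub_zero]; rfl
    _ ≤ ‖(A - S)ᴴ‖ * ‖u‖ := frobenius_norm_toLp_mulVec_le _ _
    _ = frobNorm (A - S) := by rw [hu, mul_one, frobenius_norm_conjTranspose, frobNorm_eq_norm]

theorem exists_rank_lt_frobNorm_sub_le (A : Matrix (Fin n) (Fin m) 𝕜)
    {u : EuclideanSpace 𝕜 (Fin n)} (hu : ‖u‖ = 1) :
    ∃ S : Matrix (Fin n) (Fin m) 𝕜, S.rank < n ∧ frobNorm (A - S) ≤ ‖toEuclideanLin Aᴴ u‖ := by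
  set w := Aᴴ *ᵥ WithLp.ofLp u
  have hunit : star (WithLp.ofLp u) ⬝ᵥ WithLp.ofLp u = 1 := by
    rw [dotProduct_comm, ← EuclideanSpace.inner_eq_star_dotProduct, inner_self_eq_norm_sq_to_K, hu]
    simp
  refine ⟨A - vecMulVec (WithLp.ofLp u) (star w), ?_, ?_⟩
  · suffices (A - vecMulVec (WithLp.ofLp u) (star w))ᴴ.rank < Fintype.card (Fin n) by
      rwa [rank_conjTranspose, Fintype.card_fin] at this
    rw [rank_lt_card_width_iff_exists_mulVec_eq_zero]
    refine ⟨WithLp.ofLp u, ?_, ?_⟩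
    · have hu0 : u ≠ 0 := ne_zero_of_norm_ne_zero (by rw [hu]; exact one_ne_zero)
      simpa using hu0
    · rw [conjTranspose_sub, conjTranspose_vecMulVec, star_star, sub_mulVec, vecMulVec_mulVec,
        hunit]
      simp [w]
  · rw [sub_sub_cancel, frobNorm_eq_norm]
    calc ‖vecMulVec (WithLp.ofLp u) (star w)‖ ≤ ‖u‖ * ‖WithLp.toLp 2 w‖ :=
          frobenius_norm_vecMulVec_star_le _ _
      _ = ‖toEuclideanLin Aᴴ u‖ := by rw [hu, one_mul]; rfl

end SingularValues

theorem frobenius_dist_to_singular_eq_sigmaMin_general {𝕜 : Type*} [RCLike 𝕜] {n m : ℕ}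
    (hn : 0 < n) (A : Matrix (Fin n) (Fin m) 𝕜) :
    sInf {r : ℝ | ∃ S : Matrix (Fin n) (Fin m) 𝕜, S.rank < n ∧ r = frobNorm (A - S)} =
      sigmaMin A := by
  obtain ⟨u, hu, hσ⟩ := exists_norm_eq_one_sigmaMin_eq hn A
  obtain ⟨S, hS, hdist⟩ := exists_rank_lt_frobNorm_sub_le A hu
  refine IsLeast.csInf_eq ⟨⟨S, hS, ?_⟩, ?_⟩
  · exact le_antisymm (sigmaMin_le_frobNorm_sub A S hS) (hσ ▸ hdist)
  · rintro _ ⟨T, hT, rfl⟩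
    exact sigmaMin_le_frobNorm_sub A T hT

/-- The Frobenius distance from `A` to the set of rank-deficient matrices equals the
smallest singular value of `A`. -/
theorem frobenius_dist_to_singular_eq_sigmaMin {𝕜 : Type*} [RCLike 𝕜] {n m : ℕ}
    (hn : 0 < n) (hnm : n ≤ m) (A : Matrix (Fin n) (Fin m) 𝕜) :
    sInf {r : ℝ | ∃ S : Matrix (Fin n) (Fin m) 𝕜, S.rank < n ∧ r = frobNorm (A - S)} =
      sigmaMin A :=
  frobenius_dist_to_singular_eq_sigmaMin_general hn A
end

section
/- For every A ∈ GL_{n,m} (full-rank n×m matrix, n ≤ m) and every B ∈ K^{n×m}, the second symmetric upper derivative of α(A) = σ_n(A)^{-2} at A in direction B satisfies limsup_{h→0} (σ_n(A+hB)^{-2} + σ_n(A−hB)^{-2} − 2σ_n(A)^{-2})/h² > −∞. -/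
/-!
Let `σ = σ_n(A) > 0`, attained as `‖Aᴴ u‖` at a unit vector `u`. Testing `A ± hB` on the same
`u`, the parallelogram law gives `σ(A + hB) + σ(A - hB) ≤ 2σ + h²‖B‖²/σ`: `σ_n` is semiconcave
along lines. As `σ_n` is `1`-Lipschitz, `σ(A ± hB) > 0` for small `h`, and the tangent line
of the convex function `t ↦ t⁻²` at `σ` turns the semiconcavity bound into
`α(A + hB) + α(A - hB) - 2α(A) ≥ -2h²‖B‖²/σ⁴`.
-/

open scoped BigOperators
open Matrix

open Filter Topology Metric

lemma inv_sq_sub_le_inv_sq {s t : ℝ} (hs : 0 < s) (ht : 0 < t) :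
    (s ^ 2)⁻¹ - 2 / s ^ 3 * (t - s) ≤ (t ^ 2)⁻¹ := by
  have key : (t ^ 2)⁻¹ - ((s ^ 2)⁻¹ - 2 / s ^ 3 * (t - s))
      = (t - s) ^ 2 * (2 * t + s) / (s ^ 3 * t ^ 2) := by
    field_simp
    ring
  linarith [show 0 ≤ (t - s) ^ 2 * (2 * t + s) / (s ^ 3 * t ^ 2) by positivity]

lemma norm_add_add_norm_sub_le {𝕜 F : Type*} [RCLike 𝕜] [NormedAddCommGroup F]
    [InnerProductSpace 𝕜 F] {x : F} (hx : x ≠ 0) (y : F) :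
    ‖x + y‖ + ‖x - y‖ ≤ 2 * ‖x‖ + ‖y‖ ^ 2 / ‖x‖ := by
  have hx' : 0 < ‖x‖ := norm_pos_iff.2 hx
  have hpar := parallelogram_law_with_norm 𝕜 x y
  have hsq : (‖x + y‖ + ‖x - y‖) ^ 2 ≤ (2 * ‖x‖ + ‖y‖ ^ 2 / ‖x‖) ^ 2 := by
    have : (2 * ‖x‖ + ‖y‖ ^ 2 / ‖x‖) ^ 2 = 4 * (‖x‖ ^ 2 + ‖y‖ ^ 2) + (‖y‖ ^ 2 / ‖x‖) ^ 2 := by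
      field_simp
      ring
    nlinarith [sq_nonneg (‖x + y‖ - ‖x - y‖), sq_nonneg (‖y‖ ^ 2 / ‖x‖)]
  exact (pow_le_pow_iff_left₀ (by positivity) (by positivity) two_ne_zero).1 hsq

lemma le_inv_sq_add_inv_sq_of_add_le {s t₁ t₂ δ : ℝ} (hs : 0 < s) (h₁ : 0 < t₁) (h₂ : 0 < t₂)
    (hsum : t₁ + t₂ ≤ 2 * s + δ) :
    2 * (s ^ 2)⁻¹ - 2 / s ^ 3 * δ ≤ (t₁ ^ 2)⁻¹ + (t₂ ^ 2)⁻¹ := by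
  have := mul_le_mul_of_nonneg_left (sub_le_iff_le_add'.2 hsum) (by positivity : 0 ≤ 2 / s ^ 3)
  linarith [inv_sq_sub_le_inv_sq hs h₁, inv_sq_sub_le_inv_sq hs h₂]

lemma eventually_le_inv_sq_secondDiffQuot {f : ℝ → ℝ} {s C : ℝ} (hs : 0 < s)
    (hpos : ∀ᶠ h in 𝓝 0, 0 < f h) (hsum : ∀ h, f h + f (-h) ≤ 2 * s + C * h ^ 2) :
    ∀ᶠ h in 𝓝[≠] 0, -(2 * C / s ^ 3) ≤
      (((f h) ^ 2)⁻¹ + ((f (-h)) ^ 2)⁻¹ - 2 * (s ^ 2)⁻¹) / h ^ 2 := by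
  have hpos' : ∀ᶠ h in 𝓝 0, 0 < f (-h) := by
    simpa using (continuous_neg.tendsto' (0 : ℝ) 0 neg_zero).eventually hpos
  filter_upwards [nhdsWithin_le_nhds hpos, nhdsWithin_le_nhds hpos', self_mem_nhdsWithin]
    with h h₁ h₂ (h0 : h ≠ 0)
  rw [le_div_iff₀ (by positivity)]
  have := le_inv_sq_add_inv_sq_of_add_le hs h₁ h₂ (hsum h)
  linarith [show 2 / s ^ 3 * (C * h ^ 2) = 2 * C / s ^ 3 * h ^ 2 by ring]

lemma bot_lt_limsup_of_eventually_le {α : Type*} {l : Filter α} [l.NeBot] {u : α → ℝ} {c : ℝ}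
    (h : ∀ᶠ x in l, c ≤ u x) : (⊥ : EReal) < limsup (fun x => (u x : EReal)) l :=
  (EReal.bot_lt_coe c).trans_le
    (le_limsup_of_frequently_le' (h.mono fun _ hx => EReal.coe_le_coe hx).frequently)

section MinModulus

variable {𝕜 E F : Type*} [RCLike 𝕜] [NormedAddCommGroup E] [NormedSpace 𝕜 E] [NormedAddCommGroup F]

section Normed

variable [NormedSpace 𝕜 F]

noncomputable def minModulus (T : E →L[𝕜] F) : ℝ :=
  ⨅ u : sphere (0 : E) 1, ‖T u‖

lemma minModulus_le (T : E →L[𝕜] F) {u : E} (hu : ‖u‖ = 1) : minModulus T ≤ ‖T u‖ :=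
  ciInf_le ⟨0, by rintro _ ⟨v, rfl⟩; exact norm_nonneg _⟩ (⟨u, by simpa using hu⟩ : sphere (0 : E) 1)

lemma minModulus_of_subsingleton [Subsingleton E] (T : E →L[𝕜] F) : minModulus T = 0 := by
  have : IsEmpty (sphere (0 : E) 1) := by
    simp [sphere_eq_empty_of_subsingleton one_ne_zero]
  exact Real.iInf_of_isEmpty _

lemma minModulus_sub_norm_le [Nontrivial E] (T S : E →L[𝕜] F) :
    minModulus T - ‖S‖ ≤ minModulus (T + S) := by
  have := NormedSpace.sphere_nonempty_rclike 𝕜 (E := E) zero_le_one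
  refine le_ciInf fun ⟨u, hu⟩ => ?_
  have hu1 : ‖u‖ = 1 := by simpa using hu
  calc minModulus T - ‖S‖ ≤ ‖T u‖ - ‖S u‖ := by
        gcongr
        · exact minModulus_le T hu1
        · simpa [hu1] using S.le_opNorm u
    _ ≤ ‖(T + S) u‖ := norm_sub_le_norm_add (T u) (S u)

lemma exists_norm_eq_minModulus [FiniteDimensional 𝕜 E] [Nontrivial E] (T : E →L[𝕜] F) :
    ∃ u : E, ‖u‖ = 1 ∧ ‖T u‖ = minModulus T := by
  have := FiniteDimensional.proper_rclike 𝕜 E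
  have hne := NormedSpace.sphere_nonempty_rclike 𝕜 (E := E) zero_le_one
  obtain ⟨u, hu, hmin⟩ := (isCompact_sphere (0 : E) 1).exists_isMinOn
    (Set.nonempty_coe_sort.1 hne) (continuous_norm.comp T.continuous).continuousOn
  have hu1 : ‖u‖ = 1 := by simpa using hu
  exact ⟨u, hu1, le_antisymm (le_ciInf fun v => hmin v.2) (minModulus_le T hu1)⟩

lemma minModulus_pos [FiniteDimensional 𝕜 E] [Nontrivial E] {T : E →L[𝕜] F}
    (hT : Function.Injective T) : 0 < minModulus T := by
  obtain ⟨u, hu, hTu⟩ := exists_norm_eq_minModulus T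
  rw [← hTu, norm_pos_iff, ← map_zero T, hT.ne_iff]
  exact norm_ne_zero_iff.1 (by simp [hu])

lemma lipschitzWith_minModulus [Nontrivial E] : LipschitzWith 1 (minModulus : (E →L[𝕜] F) → ℝ) :=
  LipschitzWith.of_le_add fun T T' => by
    simpa [dist_eq_norm', sub_le_iff_le_add] using minModulus_sub_norm_le T (T' - T)

end Normed

variable [InnerProductSpace 𝕜 F]

lemma minModulus_add_add_minModulus_sub_le [FiniteDimensional 𝕜 E] [Nontrivial E]
    {T : E →L[𝕜] F} (hT : 0 < minModulus T) (S : E →L[𝕜] F) :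
    minModulus (T + S) + minModulus (T - S) ≤ 2 * minModulus T + ‖S‖ ^ 2 / minModulus T := by
  obtain ⟨u, hu, hTu⟩ := exists_norm_eq_minModulus T
  have hSu : ‖S u‖ ≤ ‖S‖ := by simpa [hu] using S.le_opNorm u
  calc minModulus (T + S) + minModulus (T - S) ≤ ‖T u + S u‖ + ‖T u - S u‖ :=
        add_le_add (minModulus_le _ hu) (minModulus_le _ hu)
    _ ≤ 2 * ‖T u‖ + ‖S u‖ ^ 2 / ‖T u‖ :=
        norm_add_add_norm_sub_le (𝕜 := 𝕜) (norm_pos_iff.1 (hTu ▸ hT)) _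
    _ ≤ 2 * minModulus T + ‖S‖ ^ 2 / minModulus T := by
        rw [hTu]
        gcongr

lemma eventually_le_inv_sq_minModulus_secondDiffQuot [FiniteDimensional 𝕜 E] [Nontrivial E]
    {T : E →L[𝕜] F} (hT : 0 < minModulus T) (S : E →L[𝕜] F) :
    ∀ᶠ h : ℝ in 𝓝[≠] 0, -(2 * (‖S‖ ^ 2 / minModulus T) / minModulus T ^ 3) ≤
      ((minModulus (T + (h : 𝕜) • S) ^ 2)⁻¹ + (minModulus (T - (h : 𝕜) • S) ^ 2)⁻¹
        - 2 * (minModulus T ^ 2)⁻¹) / h ^ 2 := by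
  have hpos : ∀ᶠ h : ℝ in 𝓝 0, 0 < minModulus (T + (h : 𝕜) • S) := by
    refine ((lipschitzWith_minModulus.continuous.comp ?_).tendsto' 0 _ ?_).eventually_const_lt hT
    · fun_prop
    · simp
  have hsum (h : ℝ) : minModulus (T + (h : 𝕜) • S) + minModulus (T + ((-h : ℝ) : 𝕜) • S)
      ≤ 2 * minModulus T + ‖S‖ ^ 2 / minModulus T * h ^ 2 := by
    have := minModulus_add_add_minModulus_sub_le hT ((h : 𝕜) • S)
    rw [norm_smul, RCLike.norm_ofReal, mul_pow, sq_abs] at this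
    rw [RCLike.ofReal_neg, neg_smul, ← sub_eq_add_neg]
    convert this using 2
    ring
  simpa [neg_smul, ← sub_eq_add_neg] using eventually_le_inv_sq_secondDiffQuot hT hpos hsum

end MinModulus

section Matrix

variable {𝕜 ι κ : Type*} [RCLike 𝕜] [Fintype ι] [Fintype κ] [DecidableEq ι]

noncomputable def conjTransposeCLM (A : Matrix ι κ 𝕜) :
    EuclideanSpace 𝕜 ι →L[𝕜] EuclideanSpace 𝕜 κ :=
  LinearMap.toContinuousLinearMap (toEuclideanLin Aᴴ)

lemma sigmaMin_eq_minModulus {n m : ℕ} (A : Matrix (Fin n) (Fin m) 𝕜) :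
    sigmaMin A = minModulus (conjTransposeCLM A) :=
  rfl

lemma conjTransposeCLM_add_smul (A B : Matrix ι κ 𝕜) (h : ℝ) :
    conjTransposeCLM (A + h • B) = conjTransposeCLM A + (h : 𝕜) • conjTransposeCLM B := by
  ext u : 1
  simp [conjTransposeCLM, Matrix.toLpLin_apply, Matrix.smul_mulVec]

lemma conjTransposeCLM_sub_smul (A B : Matrix ι κ 𝕜) (h : ℝ) :
    conjTransposeCLM (A - h • B) = conjTransposeCLM A - (h : 𝕜) • conjTransposeCLM B := by
  ext u : 1
  simp [conjTransposeCLM, Matrix.toLpLin_apply, Matrix.smul_mulVec]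

open scoped ComplexOrder in
lemma conjTransposeCLM_injective {A : Matrix ι κ 𝕜} (hA : A.rank = Fintype.card ι) :
    Function.Injective (conjTransposeCLM A) := by
  have hker : LinearMap.ker Aᴴ.mulVecLin = ⊥ := by
    have := Aᴴ.mulVecLin.finrank_range_add_finrank_ker
    rw [← Matrix.rank, Matrix.rank_conjTranspose, hA, Module.finrank_fintype_fun_eq_card] at this
    exact Submodule.finrank_eq_zero.1 (by omega)
  intro u v huv
  exact WithLp.ofLp_injective 2 (LinearMap.ker_eq_bot.1 hker (congrArg WithLp.ofLp huv))

end Matrix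

theorem secondSymDeriv_sigmaMin_inv_sq_gt_bot_general {𝕜 : Type*} [RCLike 𝕜] {n m : ℕ}
    (A B : Matrix (Fin n) (Fin m) 𝕜) (hA : A.rank = n) :
    (⊥ : EReal) < Filter.limsup
      (fun h : ℝ =>
        (((((sigmaMin (A + h • B)) ^ 2)⁻¹ + ((sigmaMin (A - h • B)) ^ 2)⁻¹
            - 2 * ((sigmaMin A) ^ 2)⁻¹) / h ^ 2 : ℝ) : EReal))
      (nhdsWithin (0 : ℝ) {0}ᶜ) := by
  simp only [sigmaMin_eq_minModulus, conjTransposeCLM_add_smul, conjTransposeCLM_sub_smul]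
  rcases subsingleton_or_nontrivial (EuclideanSpace 𝕜 (Fin n)) with hE | hE
  -- for `n = 0` the unit sphere is empty and every `sigmaMin` takes the junk value `0`
  · exact bot_lt_limsup_of_eventually_le (c := 0) (.of_forall fun h => by
      simp [minModulus_of_subsingleton])
  have hs := minModulus_pos (conjTransposeCLM_injective (hA.trans (Fintype.card_fin n).symm))
  exact bot_lt_limsup_of_eventually_le (eventually_le_inv_sq_minModulus_secondDiffQuot hs _)

/-- For every full-rank `A` and every direction `B`, the second symmetric upper derivative of
`α(A) = σ_n(A)⁻²` at `A` in direction `B` is `> -∞`. -/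
theorem secondSymDeriv_sigmaMin_inv_sq_gt_bot {𝕜 : Type*} [RCLike 𝕜] {n m : ℕ}
    (hnm : n ≤ m) (A B : Matrix (Fin n) (Fin m) 𝕜) (hA : A.rank = n) :
    (⊥ : EReal) < Filter.limsup
      (fun h : ℝ =>
        (((((sigmaMin (A + h • B)) ^ 2)⁻¹ + ((sigmaMin (A - h • B)) ^ 2)⁻¹
            - 2 * ((sigmaMin A) ^ 2)⁻¹) / h ^ 2 : ℝ) : EReal))
      (nhdsWithin (0 : ℝ) {0}ᶜ) :=
  secondSymDeriv_sigmaMin_inv_sq_gt_bot_general A B hA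
end

section
/- For A ∈ K^{n×m} with n ≤ m, A_h = A + hB, and any B, one has σ_n(A_h)^{-2} + σ_n(A_{−h})^{-2} ≥ 2 λ_n(AA* + h²BB*)^{-1}, where λ_n denotes the smallest eigenvalue. -/
open scoped BigOperators ENNReal
open Matrix

/-- The smallest eigenvalue `λ_n(S) = inf_{‖u‖ = 1} u* S u` of a Hermitian matrix. -/
noncomputable def lambdaMin {𝕜 : Type*} [RCLike 𝕜] {n : ℕ} (S : Matrix (Fin n) (Fin n) 𝕜) : ℝ :=
  ⨅ u : Metric.sphere (0 : EuclideanSpace 𝕜 (Fin n)) 1,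
    RCLike.re (inner 𝕜 (u : EuclideanSpace 𝕜 (Fin n))
      (Matrix.toEuclideanLin S (u : EuclideanSpace 𝕜 (Fin n))) : 𝕜)

/-!
For a unit vector `u`, the identity
`(A + hB)(A + hB)ᴴ + (A - hB)(A - hB)ᴴ = 2 (AAᴴ + h²BBᴴ)` gives
`‖(A + hB)ᴴ u‖² + ‖(A - hB)ᴴ u‖² = 2 ⟪u, (AAᴴ + h²BBᴴ) u⟫`, and the two terms on the left are at
least `σ_n(A + hB)²` and `σ_n(A - hB)²`. Taking the infimum over `u` yields
`σ_n(A_h)² + σ_n(A_{-h})² ≤ 2 λ_n(AAᴴ + h²BBᴴ)`, which the harmonic-arithmetic mean inequality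
`4 / (x + y) ≤ 1 / x + 1 / y` turns into the claim.
-/

lemma ENNReal.two_mul_inv_ofReal_le_inv_ofReal_add_inv_ofReal {x y z : ℝ} (hx : 0 ≤ x)
    (hy : 0 ≤ y) (hxyz : x + y ≤ 2 * z) :
    2 * (ENNReal.ofReal z)⁻¹ ≤ (ENNReal.ofReal x)⁻¹ + (ENNReal.ofReal y)⁻¹ := by
  rcases hx.eq_or_lt with rfl | hx
  · simp
  rcases hy.eq_or_lt with rfl | hy
  · simp
  have hz : 0 < z := by linarith
  rw [← ENNReal.ofReal_inv_of_pos hz, ← ENNReal.ofReal_inv_of_pos hx,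
    ← ENNReal.ofReal_inv_of_pos hy, ← ENNReal.ofReal_add (by positivity) (by positivity),
    ← ENNReal.ofReal_ofNat 2, ← ENNReal.ofReal_mul zero_le_two]
  apply ENNReal.ofReal_le_ofReal
  rw [inv_add_inv hx.ne' hy.ne', ← div_eq_mul_inv, div_le_div_iff₀ hz (by positivity)]
  nlinarith [sq_nonneg (x - y)]

lemma Matrix.add_smul_mul_conjTranspose_add_sub_smul_mul_conjTranspose {𝕜 ι κ : Type*} [RCLike 𝕜]
    [Fintype κ] (A B : Matrix ι κ 𝕜) (h : ℝ) :
    (A + h • B) * (A + h • B)ᴴ + (A - h • B) * (A - h • B)ᴴ =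
      (2 : ℝ) • (A * Aᴴ + h ^ 2 • (B * Bᴴ)) := by
  simp only [conjTranspose_add, conjTranspose_sub, conjTranspose_smul, star_trivial,
    Matrix.add_mul, Matrix.mul_add, Matrix.sub_mul, Matrix.mul_sub, Matrix.smul_mul,
    Matrix.mul_smul]
  module

section

variable {𝕜 : Type*} [RCLike 𝕜] {n m : ℕ}

lemma re_inner_toEuclideanLin_mul_conjTranspose (M : Matrix (Fin n) (Fin m) 𝕜)
    (u : EuclideanSpace 𝕜 (Fin n)) :
    RCLike.re (inner 𝕜 u (toEuclideanLin (M * Mᴴ) u)) = ‖toEuclideanLin Mᴴ u‖ ^ 2 := by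
  have hadj : toEuclideanLin (M * Mᴴ) u = (toEuclideanLin Mᴴ).adjoint (toEuclideanLin Mᴴ u) := by
    rw [← toEuclideanLin_conjTranspose_eq_adjoint, conjTranspose_conjTranspose]
    simp [toLpLin_apply, mulVec_mulVec]
  rw [hadj, LinearMap.adjoint_inner_right, inner_self_eq_norm_sq]

lemma two_mul_re_inner_toEuclideanLin_eq_sq_add_sq (A B : Matrix (Fin n) (Fin m) 𝕜) (h : ℝ)
    (u : EuclideanSpace 𝕜 (Fin n)) :
    2 * RCLike.re (inner 𝕜 u (toEuclideanLin (A * Aᴴ + h ^ 2 • (B * Bᴴ)) u)) =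
      ‖toEuclideanLin (A + h • B)ᴴ u‖ ^ 2 + ‖toEuclideanLin (A - h • B)ᴴ u‖ ^ 2 := by
  rw [← re_inner_toEuclideanLin_mul_conjTranspose, ← re_inner_toEuclideanLin_mul_conjTranspose,
    ← map_add, ← inner_add_right, ← LinearMap.add_apply, ← map_add,
    add_smul_mul_conjTranspose_add_sub_smul_mul_conjTranspose, two_smul]
  simp only [map_add, LinearMap.add_apply, inner_add_right]
  ring

lemma sigmaMin_nonneg (A : Matrix (Fin n) (Fin m) 𝕜) : 0 ≤ sigmaMin A :=
  Real.iInf_nonneg fun _ => norm_nonneg _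

lemma sigmaMin_le_norm (A : Matrix (Fin n) (Fin m) 𝕜)
    (u : Metric.sphere (0 : EuclideanSpace 𝕜 (Fin n)) 1) :
    sigmaMin A ≤ ‖toEuclideanLin Aᴴ u‖ :=
  ciInf_le ⟨0, Set.forall_mem_range.2 fun _ => norm_nonneg _⟩ u

lemma sigmaMin_add_smul_sq_add_sigmaMin_sub_smul_sq_le (A B : Matrix (Fin n) (Fin m) 𝕜) (h : ℝ) :
    sigmaMin (A + h • B) ^ 2 + sigmaMin (A - h • B) ^ 2 ≤
      2 * lambdaMin (A * Aᴴ + h ^ 2 • (B * Bᴴ)) := by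
  rcases isEmpty_or_nonempty (Metric.sphere (0 : EuclideanSpace 𝕜 (Fin n)) 1) with hu | hu
  · -- for `n = 0` all three infima take the junk value `0`
    simp [sigmaMin, lambdaMin]
  rw [lambdaMin, Real.mul_iInf_of_nonneg zero_le_two]
  refine le_ciInf fun u => ?_
  rw [two_mul_re_inner_toEuclideanLin_eq_sq_add_sq]
  gcongr
  exacts [sigmaMin_nonneg _, sigmaMin_le_norm _ u, sigmaMin_nonneg _, sigmaMin_le_norm _ u]

end

theorem sigmaMin_inv_sq_add_ge_general {𝕜 : Type*} [RCLike 𝕜] {n m : ℕ}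
    (A B : Matrix (Fin n) (Fin m) 𝕜) (h : ℝ) :
    2 * (ENNReal.ofReal (lambdaMin (A * Aᴴ + (h ^ 2) • (B * Bᴴ))))⁻¹ ≤
      (ENNReal.ofReal ((sigmaMin (A + h • B)) ^ 2))⁻¹ +
        (ENNReal.ofReal ((sigmaMin (A - h • B)) ^ 2))⁻¹ :=
  ENNReal.two_mul_inv_ofReal_le_inv_ofReal_add_inv_ofReal (sq_nonneg _) (sq_nonneg _)
    (sigmaMin_add_smul_sq_add_sigmaMin_sub_smul_sq_le A B h)

/-- For `A_h = A + hB`, one has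
`σ_n(A_h)⁻² + σ_n(A_{-h})⁻² ≥ 2 λ_n(AA* + h²BB*)⁻¹` (computed in `ℝ≥0∞`, so that the
inverse of `0` is `∞`). -/
theorem sigmaMin_inv_sq_add_ge {𝕜 : Type*} [RCLike 𝕜] {n m : ℕ} (hnm : n ≤ m)
    (A B : Matrix (Fin n) (Fin m) 𝕜) (h : ℝ) :
    2 * (ENNReal.ofReal (lambdaMin (A * Aᴴ + (h ^ 2) • (B * Bᴴ))))⁻¹ ≤
      (ENNReal.ofReal ((sigmaMin (A + h • B)) ^ 2))⁻¹ +
        (ENNReal.ofReal ((sigmaMin (A - h • B)) ^ 2))⁻¹ :=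
  sigmaMin_inv_sq_add_ge_general A B h
end

section
/- Let f : ℝ → ℝ^n be locally integrable and let x be a Lebesgue point of f (i.e., a point where an antiderivative F of f satisfies F'(x) = f(x)). Then lim_{ε→0} (2/ε²) ∫_x^{x+ε} (y−x) f(y) dy = f(x). -/
open MeasureTheory intervalIntegral

/-!
Writing `y - x = ∫_x^y dt` and swapping the integrals over the triangle `x < t < y < x + ε`
gives `∫_x^{x+ε} (y - x) f(y) dy = ∫_x^{x+ε} (F(x + ε) - F(t)) dt`. Inserting the first-order
expansion `F(s) = F(x) + (s - x) f(x) + o(|s - x|)`, the linear part integrates to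
`(ε² / 2) f(x)` and the remainder contributes `o(ε²)`.
-/

section

open Set Filter Topology

variable {E : Type*} [NormedAddCommGroup E] [NormedSpace ℝ E]

theorem isLittleO_integral_sub_of_isLittleO {R : ℝ → E} {x : ℝ}
    (hR : R =o[𝓝 x] fun s => s - x) :
    (fun ε => ∫ t in x..x + ε, (R (x + ε) - R t)) =o[𝓝 0] fun ε => ε ^ 2 := by
  refine Asymptotics.IsLittleO.of_bound fun c hc => ?_
  obtain ⟨r, hr, hR_le⟩ := Metric.eventually_nhds_iff.mp (hR.def (c := c / 2) (by positivity))
  filter_upwards [Metric.ball_mem_nhds 0 hr] with ε hεr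
  rw [mem_ball_zero_iff, Real.norm_eq_abs] at hεr
  have hR_small : ∀ s ∈ uIcc x (x + ε), ‖R s‖ ≤ c / 2 * |ε| := fun s hs => by
    have hs' : |s - x| ≤ |ε| := by simpa using abs_sub_left_of_mem_uIcc hs
    calc ‖R s‖ ≤ c / 2 * ‖s - x‖ := hR_le (by rw [Real.dist_eq]; linarith)
      _ ≤ c / 2 * |ε| := by rw [Real.norm_eq_abs]; gcongr
  calc ‖∫ t in x..x + ε, (R (x + ε) - R t)‖ ≤ c * |ε| * |x + ε - x| :=
        norm_integral_le_of_norm_le_const fun t ht =>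
          (norm_sub_le _ _).trans (add_le_add (hR_small _ right_mem_uIcc)
            (hR_small t (uIoc_subset_uIcc ht))) |>.trans_eq (by ring)
    _ = c * ‖ε ^ 2‖ := by
        rw [add_sub_cancel_left, mul_assoc, abs_mul_abs_self, Real.norm_of_nonneg (sq_nonneg ε),
          sq]

variable [CompleteSpace E]

theorem setIntegral_Ioc_sub_smul_eq {f : ℝ → E} {a b : ℝ} (hf : IntegrableOn f (Ioc a b)) :
    ∫ y in Ioc a b, (y - a) • f y = ∫ t in Ioc a b, ∫ y in Ioc t b, f y := by
  have : IsFiniteMeasure (volume.restrict (Ioc a b)) := isFiniteMeasure_restrict.mpr (by simp)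
  have hg : Integrable (Function.uncurry fun t y => (Ioi t).indicator f y)
      ((volume.restrict (Ioc a b)).prod (volume.restrict (Ioc a b))) :=
    (hf.comp_snd _).indicator (measurableSet_lt measurable_fst measurable_snd)
  calc ∫ y in Ioc a b, (y - a) • f y
      = ∫ y in Ioc a b, ∫ t in Ioc a b, (Ioi t).indicator f y := by
        refine setIntegral_congr_fun measurableSet_Ioc fun y hy => ?_
        have hsec : Ioc a b ∩ Iio y = Ioo a y := by grind
        have hind : (fun t => (Ioi t).indicator f y) = (Iio y).indicator fun _ => f y := by
          ext t; simp [indicator_apply]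
        rw [hind, setIntegral_indicator measurableSet_Iio, hsec, setIntegral_const,
          Real.volume_real_Ioo_of_le hy.1.le]
    _ = ∫ t in Ioc a b, ∫ y in Ioc a b, (Ioi t).indicator f y :=
        (integral_integral_swap hg).symm
    _ = ∫ t in Ioc a b, ∫ y in Ioc t b, f y := by
        refine setIntegral_congr_fun measurableSet_Ioc fun t ht => ?_
        rw [setIntegral_indicator measurableSet_Ioi, Ioc_inter_Ioi, max_eq_right ht.1.le]

theorem integral_sub_smul_eq_integral_integral_of_le {f : ℝ → E} {a b : ℝ} (hab : a ≤ b)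
    (hf : IntervalIntegrable f volume a b) :
    ∫ y in a..b, (y - a) • f y = ∫ t in a..b, ∫ y in t..b, f y := by
  rw [integral_of_le hab, integral_of_le hab, setIntegral_Ioc_sub_smul_eq hf.1]
  exact setIntegral_congr_fun measurableSet_Ioc fun t ht => (integral_of_le ht.2).symm

theorem integral_sub_smul_eq_integral_integral {f : ℝ → E} {a b : ℝ}
    (hf : IntervalIntegrable f volume a b) :
    ∫ y in a..b, (y - a) • f y = ∫ t in a..b, ∫ y in t..b, f y := by
  rcases le_total a b with hab | hba
  · exact integral_sub_smul_eq_integral_integral_of_le hab hf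
  have hf' := hf.symm
  have hprim : IntervalIntegrable (fun t => ∫ y in t..a, f y) volume b a :=
    (continuousOn_primitive_interval_left ((intervalIntegrable_iff').mp hf')).intervalIntegrable
  calc ∫ y in a..b, (y - a) • f y
      = ∫ y in b..a, ((a - b) • f y - (y - b) • f y) := by
        rw [integral_symm, ← intervalIntegral.integral_neg]
        congr 1; ext y; module
    _ = ∫ t in b..a, ((∫ y in b..a, f y) - ∫ y in t..a, f y) := by
        have hsmul : IntervalIntegrable (fun y => (y - b) • f y) volume b a :=
          hf'.continuousOn_smul (by fun_prop)
        rw [integral_sub (f := fun y => (a - b) • f y) (hf'.smul (a - b)) hsmul,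
          intervalIntegral.integral_smul,
          integral_sub_smul_eq_integral_integral_of_le hba hf',
          integral_sub intervalIntegrable_const hprim, intervalIntegral.integral_const]
    _ = ∫ t in b..a, ∫ y in b..t, f y :=
        integral_congr fun t ht => sub_eq_of_eq_add (integral_add_adjacent_intervals
          (hf'.mono_set (uIcc_subset_uIcc_left ht)) (hf'.mono_set (uIcc_subset_uIcc_right ht))).symm
    _ = ∫ t in a..b, ∫ y in t..b, f y := by
        rw [integral_symm, ← intervalIntegral.integral_neg]
        simp_rw [integral_symm b]

theorem tendsto_two_div_sq_smul_integral_sub_of_hasDerivAt {F : ℝ → E} {f' : E} {x : ℝ}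
    (hFi : ∀ b, IntervalIntegrable F volume x b) (hx : HasDerivAt F f' x) :
    Tendsto (fun ε => (2 / ε ^ 2) • ∫ t in x..x + ε, (F (x + ε) - F t))
      (𝓝[≠] 0) (𝓝 f') := by
  set R := fun s => F s - F x - (s - x) • f' with hR
  have hdecomp : ∀ ε ≠ 0, (2 / ε ^ 2) • ∫ t in x..x + ε, (F (x + ε) - F t)
      = f' + (2 : ℝ) • (ε ^ 2)⁻¹ • ∫ t in x..x + ε, (R (x + ε) - R t) := by
    intro ε hε
    have hRi : IntervalIntegrable (fun t => R (x + ε) - R t) volume x (x + ε) :=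
      intervalIntegrable_const.sub (((hFi _).sub intervalIntegrable_const).sub
        (Continuous.intervalIntegrable (by fun_prop) _ _))
    have hsplit : ∀ t, F (x + ε) - F t = (R (x + ε) - R t) + (x + ε - t) • f' := fun t => by
      simp only [hR]; module
    have harea : ∫ t in x..x + ε, (x + ε - t) = ε ^ 2 / 2 := by
      simp [intervalIntegral.integral_comp_sub_left (fun t => t)]
    simp_rw [hsplit]
    rw [integral_add hRi (Continuous.intervalIntegrable (by fun_prop) _ _),
      intervalIntegral.integral_smul_const, harea, smul_add, smul_smul, smul_smul,
      show 2 / ε ^ 2 * (ε ^ 2 / 2) = 1 by field_simp, one_smul, add_comm, div_eq_mul_inv]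
  have hsmall : Tendsto
      (fun ε => (2 : ℝ) • (ε ^ 2)⁻¹ • ∫ t in x..x + ε, (R (x + ε) - R t))
      (𝓝[≠] 0) (𝓝 0) := by
    have h := (isLittleO_integral_sub_of_isLittleO hx.isLittleO).tendsto_inv_smul_nhds_zero
      |>.const_smul (2 : ℝ)
    rw [smul_zero] at h
    exact h.mono_left nhdsWithin_le_nhds
  have hlim := (tendsto_const_nhds (x := f')).add hsmall
  rw [add_zero] at hlim
  exact hlim.congr' (eventually_nhdsWithin_of_forall fun ε hε => (hdecomp ε hε).symm)

end

/-- Lemma 5.3 of the paper: if `x` is a point where an antiderivative `F` of a locally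
integrable `f : ℝ → ℝⁿ` is differentiable with `F'(x) = f(x)`, then
`lim_{ε→0} (2/ε²) ∫_x^{x+ε} (y−x) f(y) dy = f(x)`. -/
theorem lim_weighted_average_eq {n : ℕ} (f F : ℝ → EuclideanSpace ℝ (Fin n)) (x : ℝ)
    (hf : LocallyIntegrable f volume)
    (hF : ∀ a b : ℝ, F b - F a = ∫ y in a..b, f y)
    (hx : HasDerivAt F (f x) x) :
    Filter.Tendsto (fun ε : ℝ => (2 / ε ^ 2) • ∫ y in x..(x + ε), (y - x) • f y)
      (nhdsWithin (0 : ℝ) {0}ᶜ) (nhds (f x)) := by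
  have hfi : ∀ a b, IntervalIntegrable f volume a b := fun a b =>
    (hf.integrableOn_isCompact isCompact_uIcc).intervalIntegrable
  have hFc : Continuous F := by
    have hF_eq : F = fun t => F x + ∫ y in x..t, f y := funext fun t => by rw [← hF x t]; abel
    rw [hF_eq]
    exact continuous_const.add (continuous_primitive hfi x)
  have hweight :
      ∀ ε, ∫ y in x..x + ε, (y - x) • f y = ∫ t in x..x + ε, (F (x + ε) - F t) :=
    fun ε => by simp_rw [integral_sub_smul_eq_integral_integral (hfi _ _), hF]
  simp_rw [hweight]
  exact tendsto_two_div_sq_smul_integral_sub_of_hasDerivAt (hFc.intervalIntegrable x) hx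
end

section
/- Let φ : (a,b) → ℝ be continuous. If the second symmetric upper derivative SD²φ(x) = limsup_{h→0}(φ(x+h)+φ(x−h)−2φ(x))/h² is nonnegative for all x in (a,b), then φ is convex on (a,b). -/
/-!
At an interior maximum `c` of a continuous function `g` one has
`g (c + d) + g (c - d) - 2 g c ≤ 0` for all small `d`; so if every point carries arbitrarily
small `d` making this second difference positive, `g` attains its maximum on `[u, v]` at an
endpoint. Applied to `f` minus its chord over `[u, v]` this gives convexity. A nonnegative
upper symmetric derivative only yields positive second differences after adding `ε t²`, whose
second difference is `2 ε d²`; convexity of `φ` follows by letting `ε → 0`.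
-/

open Filter Set Topology

def secondSymDiff (f : ℝ → ℝ) (x d : ℝ) : ℝ := f (x + d) + f (x - d) - 2 * f x

lemma secondSymDiff_nonpos_of_isMaxOn {g : ℝ → ℝ} {s : Set ℝ} {c d : ℝ} (hc : IsMaxOn g s c)
    (hplus : c + d ∈ s) (hminus : c - d ∈ s) : secondSymDiff g c d ≤ 0 := by
  have h₁ : g (c + d) ≤ g c := hc hplus
  have h₂ : g (c - d) ≤ g c := hc hminus
  unfold secondSymDiff
  linarith

lemma le_max_of_frequently_secondSymDiff_pos {g : ℝ → ℝ} {u v : ℝ}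
    (hg : ContinuousOn g (Icc u v))
    (hpos : ∀ x ∈ Ioo u v, ∃ᶠ d in 𝓝[≠] 0, 0 < secondSymDiff g x d) :
    ∀ z ∈ Icc u v, g z ≤ max (g u) (g v) := by
  intro z hz
  obtain ⟨c, hc, hmax⟩ := isCompact_Icc.exists_isMaxOn ⟨z, hz⟩ hg
  suffices c = u ∨ c = v by
    rcases this with rfl | rfl
    · exact (hmax hz).trans (le_max_left _ _)
    · exact (hmax hz).trans (le_max_right _ _)
  by_contra! hne
  have hcint : c ∈ Ioo u v := ⟨hc.1.lt_of_ne' hne.1, hc.2.lt_of_ne hne.2⟩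
  have hsmall : ∀ᶠ d in 𝓝[≠] (0 : ℝ), c + d ∈ Icc u v ∧ c - d ∈ Icc u v := by
    have hplus : Tendsto (fun d : ℝ => c + d) (𝓝 0) (𝓝 c) :=
      (continuous_const.add continuous_id).tendsto' 0 c (add_zero c)
    have hminus : Tendsto (fun d : ℝ => c - d) (𝓝 0) (𝓝 c) :=
      (continuous_const.sub continuous_id).tendsto' 0 c (sub_zero c)
    exact nhdsWithin_le_nhds <|
      (hplus.eventually (Icc_mem_nhds hcint.1 hcint.2)).and
        (hminus.eventually (Icc_mem_nhds hcint.1 hcint.2))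
  obtain ⟨d, hd, hplus, hminus⟩ := ((hpos c hcint).and_eventually hsmall).exists
  exact hd.not_ge (secondSymDiff_nonpos_of_isMaxOn hmax hplus hminus)

lemma convexOn_of_frequently_secondSymDiff_pos {f : ℝ → ℝ} {s : Set ℝ} (hs : Convex ℝ s)
    (hf : ContinuousOn f s) (hpos : ∀ x ∈ s, ∃ᶠ d in 𝓝[≠] 0, 0 < secondSymDiff f x d) :
    ConvexOn ℝ s f := by
  refine LinearOrder.convexOn_of_lt hs fun x hx y hy hxy a b ha hb hab => ?_
  have hIcc : Icc x y ⊆ s := hs.ordConnected.out hx hy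
  -- `f` minus its chord over `[x, y]`, scaled by `y - x` to avoid division.
  set g : ℝ → ℝ := fun t => (y - x) * f t - ((y - t) * f x + (t - x) * f y)
  have hg : ContinuousOn g (Icc x y) := (continuousOn_const.mul (hf.mono hIcc)).sub (by fun_prop)
  have hdiff : ∀ t d, secondSymDiff g t d = (y - x) * secondSymDiff f t d := by
    intro t d
    simp only [g, secondSymDiff]
    ring
  have hgpos : ∀ t ∈ Ioo x y, ∃ᶠ d in 𝓝[≠] 0, 0 < secondSymDiff g t d := fun t ht =>
    (hpos t (hIcc (Ioo_subset_Icc_self ht))).mono fun d hd => by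
      rw [hdiff]
      exact mul_pos (sub_pos.2 hxy) hd
  have hz : a • x + b • y ∈ Icc x y := by
    rw [← segment_eq_Icc hxy.le]
    exact ⟨a, b, ha.le, hb.le, hab, rfl⟩
  have hgz := le_max_of_frequently_secondSymDiff_pos hg hgpos _ hz
  have hgx : g x = 0 := by simp only [g]; ring
  have hgy : g y = 0 := by simp only [g]; ring
  have hgz_eq : g (a • x + b • y) = (y - x) * (f (a • x + b • y) - (a • f x + b • f y)) := by
    simp only [g, smul_eq_mul]
    linear_combination (y * f x - x * f y) * hab
  rw [hgx, hgy, max_self, hgz_eq] at hgz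
  exact sub_nonpos.1 (nonpos_of_mul_nonpos_right hgz (sub_pos.2 hxy))

lemma frequently_secondSymDiff_add_smul_sq_pos {f : ℝ → ℝ} {x ε : ℝ}
    (hf : (0 : EReal) ≤ limsup (fun d : ℝ => ((secondSymDiff f x d / d ^ 2 : ℝ) : EReal)) (𝓝[≠] 0))
    (hε : 0 < ε) :
    ∃ᶠ d in 𝓝[≠] 0, 0 < secondSymDiff (f + ε • fun t => t ^ 2) x d := by
  have hlt : ((-ε : ℝ) : EReal) < limsup
      (fun d : ℝ => ((secondSymDiff f x d / d ^ 2 : ℝ) : EReal)) (𝓝[≠] 0) :=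
    lt_of_lt_of_le (by exact_mod_cast neg_lt_zero.2 hε) hf
  refine ((frequently_lt_of_lt_limsup (by isBoundedDefault) hlt).and_eventually
    self_mem_nhdsWithin).mono fun d ⟨hd, hd0⟩ => ?_
  have hd2 : 0 < d ^ 2 := sq_pos_of_ne_zero hd0
  have hfd : -ε * d ^ 2 < secondSymDiff f x d := (lt_div_iff₀ hd2).1 (EReal.coe_lt_coe_iff.1 hd)
  have hsq : secondSymDiff (f + ε • fun t => t ^ 2) x d = secondSymDiff f x d + 2 * ε * d ^ 2 := by
    simp only [secondSymDiff, Pi.add_apply, Pi.smul_apply, smul_eq_mul]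
    ring
  rw [hsq]
  linarith [mul_pos hε hd2]

lemma convexOn_of_forall_convexOn_add_smul {E : Type*} [AddCommMonoid E] [Module ℝ E]
    {s : Set E} {f g : E → ℝ} (h : ∀ ε : ℝ, 0 < ε → ConvexOn ℝ s (f + ε • g)) : ConvexOn ℝ s f := by
  refine ⟨(h 1 one_pos).1, fun x hx y hy a b ha hb hab => ?_⟩
  set z := a • x + b • y
  have hle : ∀ ε : ℝ, 0 < ε → f z - (a • f x + b • f y) ≤ ε * (a * g x + b * g y - g z) := by
    intro ε hε
    have := (h ε hε).2 hx hy ha hb hab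
    simp only [Pi.add_apply, Pi.smul_apply, smul_eq_mul] at this ⊢
    linarith
  have hlim : Tendsto (fun ε : ℝ => ε * (a * g x + b * g y - g z)) (𝓝[>] (0 : ℝ)) (𝓝 0) := by
    simpa using ((tendsto_id (x := 𝓝 (0 : ℝ))).mul_const (a * g x + b * g y - g z)).mono_left
      nhdsWithin_le_nhds
  have hle0 := ge_of_tendsto hlim (eventually_nhdsWithin_of_forall hle)
  linarith

/-- The Schwarz-derivative convexity criterion: a continuous function on `(a,b)` whose
second symmetric upper derivative is nonnegative everywhere is convex. -/
theorem convexOn_of_secondSymDeriv_nonneg (a b : ℝ) (φ : ℝ → ℝ)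
    (hc : ContinuousOn φ (Set.Ioo a b))
    (h : ∀ x ∈ Set.Ioo a b,
      (0 : EReal) ≤ Filter.limsup
        (fun h : ℝ => (((φ (x + h) + φ (x - h) - 2 * φ x) / h ^ 2 : ℝ) : EReal))
        (nhdsWithin (0 : ℝ) {0}ᶜ)) :
    ConvexOn ℝ (Set.Ioo a b) φ :=
  convexOn_of_forall_convexOn_add_smul (g := fun t => t ^ 2) fun _ hε =>
    convexOn_of_frequently_secondSymDiff_pos (convex_Ioo a b) (hc.add (by fun_prop))
      fun x hx => frequently_secondSymDiff_add_smul_sq_pos (h x hx) hε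
end

section
/- Let W = {(A, x) ∈ GL_{n,n+1} × P(K^{n+1}) : Ax = 0} be the solution variety of homogeneous linear systems. Then W_{(k)} = {(A,x) ∈ W : A ∈ P_{(k)}} is a smooth submanifold, being the preimage of the regular value 0 of the map ψ : P_{(k)} × (K^{n+1} \ {0}) → K^n, ψ(A,x) = Ax; in particular 0 is a regular value of ψ. -/
open scoped BigOperators
open Matrix

attribute [local instance] Matrix.frobeniusNormedAddCommGroup Matrix.frobeniusNormedSpace

/-- The map `ψ(A, x) = Ax` on (the cone over) `GL_{n,n+1} × (K^{n+1} \ {0})`. -/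
def psiMap {𝕜 : Type*} [RCLike 𝕜] {n : ℕ}
    (p : Matrix (Fin n) (Fin (n + 1)) 𝕜 × (Fin (n + 1) → 𝕜)) : Fin n → 𝕜 :=
  p.1.mulVec p.2

/-! The derivative of `ψ` at `(A, x)` is `(M, y) ↦ A y + M x`; its restriction to `M = 0` is
already `A`, which is onto `𝕜ⁿ` because `A` has full rank `n`. -/

theorem Matrix.mulVec_surjective_of_rank_eq_card {K m n : Type*} [Field K] [Fintype m]
    [Fintype n] (A : Matrix m n K) (hA : A.rank = Fintype.card m) :
    Function.Surjective A.mulVec := by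
  have hrange : LinearMap.range A.mulVecLin = ⊤ :=
    Submodule.eq_top_of_finrank_eq (by rw [← Matrix.rank, hA, Module.finrank_fintype_fun_eq_card])
  exact LinearMap.range_eq_top.mp hrange

section Derivative

variable {𝕜 m n : Type*} [NontriviallyNormedField 𝕜] [CompleteSpace 𝕜] [Fintype m] [Fintype n]

theorem Matrix.isBoundedBilinearMap_mulVec :
    IsBoundedBilinearMap 𝕜 fun p : Matrix m n 𝕜 × (n → 𝕜) => p.1 *ᵥ p.2 :=
  (mulVecBilin 𝕜 𝕜 : Matrix m n 𝕜 →ₗ[𝕜] _).toContinuousBilinearMap.isBoundedBilinearMap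

theorem Matrix.fderiv_mulVec_apply (p q : Matrix m n 𝕜 × (n → 𝕜)) :
    fderiv 𝕜 (fun r : Matrix m n 𝕜 × (n → 𝕜) => r.1 *ᵥ r.2) p q = p.1 *ᵥ q.2 + q.1 *ᵥ p.2 :=
  congr($(isBoundedBilinearMap_mulVec.fderiv p) q)

end Derivative

theorem psi_deriv_surjective_general {𝕜 : Type*} [RCLike 𝕜] {n : ℕ}
    (A : Matrix (Fin n) (Fin (n + 1)) 𝕜) (x : Fin (n + 1) → 𝕜)
    (hA : A.rank = n) :
    Function.Surjective ⇑(fderiv 𝕜 (psiMap (𝕜 := 𝕜) (n := n)) (A, x)) := by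
  intro v
  obtain ⟨y, rfl⟩ := A.mulVec_surjective_of_rank_eq_card (by rw [hA, Fintype.card_fin]) v
  refine ⟨(0, y), ?_⟩
  change fderiv 𝕜 (fun r : Matrix (Fin n) (Fin (n + 1)) 𝕜 × (Fin (n + 1) → 𝕜) => r.1 *ᵥ r.2)
    (A, x) (0, y) = A *ᵥ y
  rw [fderiv_mulVec_apply, zero_mulVec, add_zero]

/-- `0` is a regular value of `ψ(A,x) = Ax` on the cone over the solution variety: at every
`(A, x)` with `A` of full rank, `x ≠ 0` and `Ax = 0`, the derivative of `ψ` is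
surjective (hence `W_{(k)} = ψ⁻¹(0)` is a smooth submanifold). -/
theorem psi_deriv_surjective {𝕜 : Type*} [RCLike 𝕜] {n : ℕ}
    (A : Matrix (Fin n) (Fin (n + 1)) 𝕜) (x : Fin (n + 1) → 𝕜)
    (hA : A.rank = n) (hx : x ≠ 0) (hAx : A.mulVec x = 0) :
    Function.Surjective ⇑(fderiv 𝕜 (psiMap (𝕜 := 𝕜) (n := n)) (A, x)) :=
  psi_deriv_surjective_general A x hA
end
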